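/- arXiv:2311.18339 — 11 statements merged into one kernel-verified Lean document; each statement's English description precedes it below -/
import Mathlib

section
/- For any integer n ≥ 3, min over positive integers l of (l² + n − l)/l is at most (√(2n−1) + n)/2. -/
theorem stmt_1 (n : ℕ) (hn : 3 ≤ n) :
    ∃ l : ℕ, 0 < l ∧ ((l : ℝ)^2 + n - l) / l ≤ (Real.sqrt (2*n - 1) + n) / 2 := by
  refine ⟨2, by norm_num, ?_⟩
  have hn' : (3 : ℝ) ≤ n := by exact_mod_cast hn
  have h2 : (2 : ℝ) ≤ Real.sqrt (2*n - 1) := by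
    rw [show (2:ℝ) ≤ Real.sqrt (2*n-1) ↔ (2:ℝ)^2 ≤ 2*n-1 from Real.le_sqrt' (by norm_num)]
    linarith
  push_cast
  rw [div_le_div_iff₀ (by norm_num) (by norm_num)]
  nlinarith
end

section
/- Let n ≥ 2 and write √n = k + ε with k the integer part and ε ∈ [0,1) the fractional part. If 0 ≤ ε ≤ (1 + 2√n − √(1+4n))/2, then min over positive integers m of (1/n)(m + n/m − 1) equals (2√n − 1 + ε²/k)/n. -/
/-! With `k = ⌊√n⌋ = Nat.sqrt n`, the hypothesis on `ε` says exactly `√(1 + 4n) ≤ 2k + 1`, i.e.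
`n ≤ k(k + 1)`. Together with `k² ≤ n` this makes `m = k` the minimiser of `m + n/m` over positive
integers, because `(m + n/m) - (k + n/k) = (m - k)(mk - n)/(mk)` and both factors of the numerator
change sign at the same place. Finally `k + n/k = 2√n + (√n - k)²/k`. -/

lemma add_div_sub_add_div {K : Type*} [Field K] {m k : K} (x : K) (hm : m ≠ 0) (hk : k ≠ 0) :
    (m + x / m) - (k + x / k) = (m - k) * (m * k - x) / (m * k) := by
  field_simp
  ring

lemma nat_add_div_le_add_div {k m : ℕ} {x : ℝ} (hk : 0 < k) (hm : 0 < m)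
    (hlow : (k : ℝ) ^ 2 ≤ x) (hup : x ≤ k * (k + 1)) :
    (k : ℝ) + x / k ≤ m + x / m := by
  have hk' : (0 : ℝ) < k := by exact_mod_cast hk
  have hm' : (0 : ℝ) < m := by exact_mod_cast hm
  have hnum : 0 ≤ ((m : ℝ) - k) * (m * k - x) := by
    rcases le_or_gt m k with hmk | hkm
    · have hmk' : (m : ℝ) ≤ k := by exact_mod_cast hmk
      have : (m : ℝ) * k ≤ x := by nlinarith
      exact mul_nonneg_of_nonpos_of_nonpos (by linarith) (by linarith)
    · have hkm' : (k : ℝ) + 1 ≤ m := by exact_mod_cast hkm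
      have : x ≤ (m : ℝ) * k := by nlinarith
      exact mul_nonneg (by linarith) (by linarith)
  have := add_div_sub_add_div x hm'.ne' hk'.ne'
  have := div_nonneg hnum (mul_pos hm' hk').le
  linarith

lemma le_mul_succ_of_sqrt_one_add_four_mul_le {n k : ℕ}
    (h : √(1 + 4 * (n : ℝ)) ≤ 1 + 2 * k) : n ≤ k * (k + 1) := by
  rw [Real.sqrt_le_left (by positivity)] at h
  have : (n : ℝ) ≤ k * (k + 1) := by nlinarith
  exact_mod_cast this

lemma two_mul_sub_one_add_sq_sub_div {K : Type*} [Field K] {k : K} (s : K) (hk : k ≠ 0) :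
    2 * s - 1 + (s - k) ^ 2 / k = k + s ^ 2 / k - 1 := by
  field_simp
  ring

theorem stmt_3_general (n : ℕ) (hn : 2 ≤ n)
    (k : ℕ) (hk : k = Nat.floor (Real.sqrt n))
    (ε : ℝ) (hε : ε = Real.sqrt n - k)
    (h2 : ε ≤ (1 + 2*Real.sqrt n - Real.sqrt (1 + 4*n))/2) :
    IsLeast {x : ℝ | ∃ m : ℕ, 1 ≤ m ∧ m ≤ n ∧ x = (1/(n : ℝ)) * (m + (n : ℝ)/m - 1)}
      ((2*Real.sqrt n - 1 + ε^2/k) / n) := by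
  rw [Real.nat_floor_real_sqrt_eq_nat_sqrt] at hk
  have hk0 : 0 < k := hk ▸ Nat.sqrt_pos.2 (by omega)
  have hlow : (k : ℝ) ^ 2 ≤ n := by exact_mod_cast hk ▸ Nat.sqrt_le' n
  have hup : (n : ℝ) ≤ k * (k + 1) := by
    exact_mod_cast le_mul_succ_of_sqrt_one_add_four_mul_le (by linarith)
  have hval : (2 * √n - 1 + ε ^ 2 / k) / n = 1 / (n : ℝ) * (k + n / k - 1) := by
    rw [hε, two_mul_sub_one_add_sq_sub_div _ (by positivity), Real.sq_sqrt (by positivity)]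
    ring
  rw [hval]
  refine ⟨⟨k, hk0, hk ▸ Nat.sqrt_le_self n, rfl⟩, ?_⟩
  rintro _ ⟨m, hm, -, rfl⟩
  gcongr _ * ?_
  linarith [nat_add_div_le_add_div hk0 hm hlow hup]

theorem stmt_3 (n : ℕ) (hn : 2 ≤ n)
    (k : ℕ) (hk : k = Nat.floor (Real.sqrt n))
    (ε : ℝ) (hε : ε = Real.sqrt n - k)
    (h1 : 0 ≤ ε) (h2 : ε ≤ (1 + 2*Real.sqrt n - Real.sqrt (1 + 4*n))/2) :
    IsLeast {x : ℝ | ∃ m : ℕ, 1 ≤ m ∧ m ≤ n ∧ x = (1/(n : ℝ)) * (m + (n : ℝ)/m - 1)}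
      ((2*Real.sqrt n - 1 + ε^2/k) / n) :=
  stmt_3_general n hn k hk ε hε h2
end

section
/- Let n ≥ 3 and write √n = k + ε with k = ⌊√n⌋ and ε the fractional part. If (1 + 2√n − √(1+4n))/2 < ε < 1, then min over positive integers m of (1/n)(m + n/m − 1) equals (2√n − 1 + (1−ε)²/(k+1))/n. -/
set_option maxHeartbeats 1000000 in
theorem stmt_4 (n : ℕ) (hn : 3 ≤ n)
    (k : ℕ) (hk : k = Nat.floor (Real.sqrt n))
    (ε : ℝ) (hε : ε = Real.sqrt n - k)
    (h1 : (1 + 2*Real.sqrt n - Real.sqrt (1 + 4*n))/2 < ε) (h2 : ε < 1) :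
    IsLeast {x : ℝ | ∃ m : ℕ, 1 ≤ m ∧ m ≤ n ∧ x = (1/(n : ℝ)) * (m + (n : ℝ)/m - 1)}
      ((2*Real.sqrt n - 1 + (1 - ε)^2/(k + 1)) / n) := by
  set s := Real.sqrt n with hs
  have hn0 : (0:ℝ) < n := by
    have : (3:ℝ) ≤ n := by exact_mod_cast hn
    linarith
  have hs0 : 0 ≤ s := Real.sqrt_nonneg _
  have hs2 : s^2 = n := Real.sq_sqrt (le_of_lt hn0)
  have hks : (k:ℝ) ≤ s := by
    rw [hk]; exact Nat.floor_le hs0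
  have hsk1 : s < (k:ℝ) + 1 := by
    rw [hε] at h2; linarith
  have hk1pos : (0:ℝ) < (k:ℝ) + 1 := by positivity
  -- from h1 : k(k+1) < n
  have hsqrt : Real.sqrt (1 + 4*n) > 2*(k:ℝ) + 1 := by
    rw [hε] at h1; linarith
  have hkk : (k:ℝ) * ((k:ℝ)+1) < n := by
    have h4 : (0:ℝ) ≤ 1 + 4*n := by linarith
    have := Real.sq_sqrt h4
    nlinarith [hsqrt, Real.sqrt_nonneg (1 + 4*(n:ℝ))]
  -- k+1 ≤ n
  have hn3 : (3:ℝ) ≤ n := by exact_mod_cast hn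
  have hk1n : (k:ℝ) + 1 ≤ n := by
    nlinarith [sq_nonneg (s - 2), hs2, hks, hn3]
  have hk1nN : k + 1 ≤ n := by exact_mod_cast hk1n
  -- value equality
  have key : (2*s - 1 + (1 - ε)^2/((k:ℝ) + 1)) / n
      = (1/(n:ℝ)) * (((k:ℝ)+1) + (n:ℝ)/((k:ℝ)+1) - 1) := by
    rw [hε, ← hs2]
    have hsne : s ≠ 0 := by positivity
    field_simp
    ring
  constructor
  · refine ⟨k+1, le_add_self, hk1nN, ?_⟩
    push_cast
    rw [key]
  · rintro x ⟨m, hm1, hmn, rfl⟩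
    have hm0 : (0:ℝ) < m := by exact_mod_cast hm1
    have hdiff : (m:ℝ) + n/m - (((k:ℝ)+1) + (n:ℝ)/((k:ℝ)+1))
        = ((m:ℝ) - ((k:ℝ)+1)) * ((m:ℝ)*((k:ℝ)+1) - n) / ((m:ℝ)*((k:ℝ)+1)) := by
      field_simp
      ring
    have hnum : 0 ≤ ((m:ℝ) - ((k:ℝ)+1)) * ((m:ℝ)*((k:ℝ)+1) - n) := by
      rcases le_or_gt m k with hmk | hmk
      · have hmk' : (m:ℝ) ≤ k := by exact_mod_cast hmk
        have h1' : (m:ℝ) * ((k:ℝ)+1) ≤ (k:ℝ) * ((k:ℝ)+1) := by nlinarith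
        nlinarith [mul_nonneg (by linarith : (0:ℝ) ≤ (k:ℝ)+1-(m:ℝ))
          (by linarith : (0:ℝ) ≤ (n:ℝ) - (m:ℝ)*((k:ℝ)+1))]
      · have hmk' : (k:ℝ) + 1 ≤ m := by exact_mod_cast hmk
        have h2' : ((k:ℝ)+1) * ((k:ℝ)+1) ≤ (m:ℝ) * ((k:ℝ)+1) := by nlinarith
        apply mul_nonneg <;> nlinarith
    have hge : ((k:ℝ)+1) + (n:ℝ)/((k:ℝ)+1) ≤ (m:ℝ) + n/m := by
      have h := div_nonneg hnum (le_of_lt (by positivity : (0:ℝ) < (m:ℝ)*((k:ℝ)+1)))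
      rw [← hdiff] at h
      linarith
    rw [key]
    have h0 : (0:ℝ) ≤ 1/(n:ℝ) := by positivity
    exact mul_le_mul_of_nonneg_left (by linarith) h0
end

section
/- Suppose U ⊆ [0,1]^n is convex, compact, and monotone (u ∈ U and 0 ≤ v ≤ u implies v ∈ U), with max{u_i : u ∈ U} = 1 for each i. Let v maximize ∑ log(u_i) over U and set c_i = 1/(n·v_i). Then 1/n ≤ c_i ≤ 1 for each i, U ⊆ U' := {u : ∑ c_i u_i ≤ 1, 0 ≤ u_i ≤ 1}, and v also maximizes ∑ log(u_i) over U'. -/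
/-!
At the maximizer `v`, the directional derivative of `∑ log uᵢ` towards any `u ∈ U` is
`∑ (uᵢ - vᵢ) / vᵢ ≤ 0`, i.e. `∑ uᵢ / vᵢ ≤ n`; this is exactly `U ⊆ U'`, and choosing `u` with
`uᵢ = 1` gives `n vᵢ ≥ 1`, whence the bounds on `cᵢ`. Conversely `log x ≤ x - 1` applied to
`uᵢ / vᵢ` shows that every positive `u` with `∑ uᵢ / vᵢ ≤ n` has `∑ log uᵢ ≤ ∑ log vᵢ`, so `v`
still maximizes over `U'`.
-/

open Real Set Finset

theorem IsMaxOn.hasDerivAt_nonpos_Icc_left {f : ℝ → ℝ} {a b f' : ℝ} (hab : a < b)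
    (hmax : IsMaxOn f (Icc a b) a) (hf : HasDerivAt f f' a) : f' ≤ 0 := by
  have hcone : b - a ∈ posTangentConeAt (Icc a b) a :=
    sub_mem_posTangentConeAt_of_segment_subset (segment_eq_Icc hab.le).subset
  have := hmax.localize.hasFDerivWithinAt_nonpos hf.hasDerivWithinAt hcone
  simp only [ContinuousLinearMap.toSpanSingleton_apply, smul_eq_mul] at this
  nlinarith

section

variable {ι : Type*} [Fintype ι]

theorem hasDerivAt_sum_log_line {u v : ι → ℝ} (hv : ∀ i, v i ≠ 0) :
    HasDerivAt (fun t : ℝ => ∑ i, log ((v + t • (u - v)) i)) (∑ i, (u i - v i) / v i) 0 := by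
  refine HasDerivAt.fun_sum fun i _ => ?_
  have hline : HasDerivAt (fun t : ℝ => v i + t * (u i - v i)) (u i - v i) 0 := by
    simpa using ((hasDerivAt_id (0 : ℝ)).mul_const (u i - v i)).const_add (v i)
  simpa using hline.log (by simpa using hv i)

theorem sum_div_le_card_of_forall_sum_log_le {U : Set (ι → ℝ)} (hconv : Convex ℝ U)
    {v : ι → ℝ} (hvU : v ∈ U) (hvpos : ∀ i, 0 < v i)
    (hvmax : ∀ u ∈ U, (∀ i, 0 < u i) → ∑ i, log (u i) ≤ ∑ i, log (v i))
    {u : ι → ℝ} (huU : u ∈ U) (hu : ∀ i, 0 ≤ u i) :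
    ∑ i, u i / v i ≤ Fintype.card ι := by
  -- Stopping at `t = 1 / 2` keeps the points strictly positive even where `u i = 0`.
  have hmax : IsMaxOn (fun t : ℝ => ∑ i, log ((v + t • (u - v)) i)) (Icc 0 (1 / 2)) 0 := by
    intro t ⟨ht₀, ht₁⟩
    have hmem : v + t • (u - v) ∈ U := hconv.add_smul_sub_mem hvU huU ⟨ht₀, by linarith⟩
    have hpos : ∀ i, 0 < (v + t • (u - v)) i := fun i => by
      have : (v + t • (u - v)) i = (1 - t) * v i + t * u i := by
        simp only [Pi.add_apply, Pi.smul_apply, Pi.sub_apply, smul_eq_mul]; ring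
      rw [this]
      nlinarith [hvpos i, hu i]
    simpa using hvmax _ hmem hpos
  have hD := hmax.hasDerivAt_nonpos_Icc_left (by norm_num)
    (hasDerivAt_sum_log_line fun i => (hvpos i).ne')
  simp only [sub_div, div_self (hvpos _).ne', Finset.sum_sub_distrib] at hD
  simpa [sub_nonpos] using hD

theorem sum_log_le_sum_log_of_sum_div_le_card {u v : ι → ℝ} (hu : ∀ i, 0 < u i)
    (hv : ∀ i, 0 < v i) (h : ∑ i, u i / v i ≤ Fintype.card ι) :
    ∑ i, log (u i) ≤ ∑ i, log (v i) := by
  have hterm : ∀ i, log (u i) - log (v i) ≤ u i / v i - 1 := fun i => by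
    rw [← log_div (hu i).ne' (hv i).ne']
    exact log_le_sub_one_of_pos (div_pos (hu i) (hv i))
  have := Finset.sum_le_sum fun i (_ : i ∈ Finset.univ) => hterm i
  simp only [Finset.sum_sub_distrib, sum_const, card_univ, nsmul_eq_mul, mul_one] at this
  linarith

theorem sum_one_div_card_mul_mul_le_one_iff (u v : ι → ℝ) :
    ∑ i, 1 / (Fintype.card ι * v i) * u i ≤ 1 ↔ ∑ i, u i / v i ≤ Fintype.card ι := by
  have hsum : ∑ i, 1 / (Fintype.card ι * v i) * u i = (∑ i, u i / v i) / Fintype.card ι := by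
    rw [Finset.sum_div]
    exact Finset.sum_congr rfl fun i _ => by field_simp
  rcases isEmpty_or_nonempty ι with _ | _
  · simp
  · rw [hsum, div_le_one (by exact_mod_cast Fintype.card_pos)]

end

theorem stmt_5_general (n : ℕ) (U : Set (Fin n → ℝ))
    (hconv : Convex ℝ U)
    (hbox : ∀ u ∈ U, ∀ i, 0 ≤ u i ∧ u i ≤ 1)
    (hmax : ∀ i, ∃ u ∈ U, u i = 1)
    (v : Fin n → ℝ) (hvU : v ∈ U) (hvpos : ∀ i, 0 < v i)
    (hvmax : ∀ u ∈ U, (∀ i, 0 < u i) →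
      ∑ i, Real.log (u i) ≤ ∑ i, Real.log (v i))
    (c : Fin n → ℝ) (hc : ∀ i, c i = 1 / ((n : ℝ) * v i)) :
    (∀ i, 1/(n : ℝ) ≤ c i ∧ c i ≤ 1) ∧
    U ⊆ {u : Fin n → ℝ | (∀ i, 0 ≤ u i ∧ u i ≤ 1) ∧ ∑ i, c i * u i ≤ 1} ∧
    (∀ u : Fin n → ℝ, ((∀ i, 0 ≤ u i ∧ u i ≤ 1) ∧ ∑ i, c i * u i ≤ 1) →
      (∀ i, 0 < u i) → ∑ i, Real.log (u i) ≤ ∑ i, Real.log (v i)) := by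
  have hU_sum_div : ∀ u ∈ U, ∑ i, u i / v i ≤ n := fun u hu => by
    simpa using sum_div_le_card_of_forall_sum_log_le hconv hvU hvpos hvmax hu
      fun i => (hbox u hu i).1
  have hcU : ∀ u : Fin n → ℝ, ∑ i, c i * u i ≤ 1 ↔ ∑ i, u i / v i ≤ n := fun u => by
    simpa [hc] using sum_one_div_card_mul_mul_le_one_iff u v
  have hnv : ∀ i, 1 ≤ n * v i := fun i => by
    obtain ⟨u, hu, hui⟩ := hmax i
    have : u i / v i ≤ n := (Finset.single_le_sum (fun j _ => div_nonneg (hbox u hu j).1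
      (hvpos j).le) (Finset.mem_univ i)).trans (hU_sum_div u hu)
    rw [hui, div_le_iff₀ (hvpos i)] at this
    linarith
  refine ⟨fun i => ⟨?_, ?_⟩, fun u hu => ⟨hbox u hu, (hcU u).2 (hU_sum_div u hu)⟩,
    fun u ⟨_, hsum⟩ hpos => sum_log_le_sum_log_of_sum_div_le_card hpos hvpos
      (by simpa using (hcU u).1 hsum)⟩
  · rw [hc]
    exact one_div_le_one_div_of_le (by linarith [hnv i])
      (mul_le_of_le_one_right n.cast_nonneg (hbox v hvU i).2)
  · rw [hc, div_le_one (by linarith [hnv i])]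
    exact hnv i

theorem stmt_5 (n : ℕ) (hn : 1 ≤ n) (U : Set (Fin n → ℝ))
    (hconv : Convex ℝ U) (hcomp : IsCompact U)
    (hbox : ∀ u ∈ U, ∀ i, 0 ≤ u i ∧ u i ≤ 1)
    (hmono : ∀ u ∈ U, ∀ v : Fin n → ℝ, (∀ i, 0 ≤ v i ∧ v i ≤ u i) → v ∈ U)
    (hmax : ∀ i, ∃ u ∈ U, u i = 1)
    (v : Fin n → ℝ) (hvU : v ∈ U) (hvpos : ∀ i, 0 < v i)
    (hvmax : ∀ u ∈ U, (∀ i, 0 < u i) →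
      ∑ i, Real.log (u i) ≤ ∑ i, Real.log (v i))
    (c : Fin n → ℝ) (hc : ∀ i, c i = 1 / ((n : ℝ) * v i)) :
    (∀ i, 1/(n : ℝ) ≤ c i ∧ c i ≤ 1) ∧
    U ⊆ {u : Fin n → ℝ | (∀ i, 0 ≤ u i ∧ u i ≤ 1) ∧ ∑ i, c i * u i ≤ 1} ∧
    (∀ u : Fin n → ℝ, ((∀ i, 0 ≤ u i ∧ u i ≤ 1) ∧ ∑ i, c i * u i ≤ 1) →
      (∀ i, 0 < u i) → ∑ i, Real.log (u i) ≤ ∑ i, Real.log (v i)) :=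
  stmt_5_general n U hconv hbox hmax v hvU hvpos hvmax c hc
end

section
/- Let n ≥ 2 and L_1 ≥ L_2 > 0 with ∑_{i=1}^n L_i · L_2 > L_1². Then 1 − (√((L_1+L_2)∑_{i=1}^n L_i − L_1²) + √(L_1 L_2))² / (n(L_1+L_2)²) < 1 − 1/n. -/
/-! Dividing out, the claim is `(a + b)² < (√A + √(ab))²` with `a = L₀`, `b = L₁`, `S = ∑ Lᵢ` and
`A = (a + b)S - a²`. The hypothesis `a² < Sb` gives `A·ab > a⁴`, so the cross term `2√(A·ab)` of the
square exceeds `2a²`, and `A + ab + 2a² > (a + b)²` reduces to `S > b`. -/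

lemma sq_add_lt_sq_sqrt_add_sqrt {a b S : ℝ} (ha : 0 < a) (hb : 0 < b) (hbS : b < S)
    (h : a ^ 2 < S * b) :
    (a + b) ^ 2 < (√((a + b) * S - a ^ 2) + √(a * b)) ^ 2 := by
  have hA : 0 < (a + b) * S - a ^ 2 := by nlinarith
  have hcross : a ^ 2 < √((a + b) * S - a ^ 2) * √(a * b) := by
    rw [← Real.sqrt_mul hA.le, Real.lt_sqrt (by positivity)]
    nlinarith [mul_lt_mul_of_pos_left h (mul_pos ha (add_pos ha hb))]
  rw [add_sq (√_), Real.sq_sqrt hA.le, Real.sq_sqrt (by positivity)]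
  nlinarith

theorem stmt_10_general (n : ℕ) (hn : 2 ≤ n) (L : ℕ → ℝ)
    (hpos : ∀ i < n, 0 < L i)
    (hcond : (L 0)^2 < (∑ i ∈ Finset.range n, L i) * L 1) :
    1 - (Real.sqrt ((L 0 + L 1) * (∑ i ∈ Finset.range n, L i) - (L 0)^2) +
        Real.sqrt (L 0 * L 1))^2 / ((n : ℝ) * (L 0 + L 1)^2) < 1 - 1/(n : ℝ) := by
  have h0 : 0 < L 0 := hpos 0 (by omega)
  have h1 : 0 < L 1 := hpos 1 (by omega)
  have hsum : L 1 < ∑ i ∈ Finset.range n, L i :=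
    Finset.single_lt_sum (j := 0) zero_ne_one
      (Finset.mem_range.mpr (by omega)) (Finset.mem_range.mpr (by omega)) h0
      fun k hk _ => (hpos k (Finset.mem_range.mp hk)).le
  have hsq := sq_add_lt_sq_sqrt_add_sqrt h0 h1 hsum hcond
  have hn' : (0 : ℝ) < n := by positivity
  rw [sub_lt_sub_iff_left, div_lt_div_iff₀ hn' (by positivity), one_mul, mul_comm (n : ℝ)]
  exact mul_lt_mul_of_pos_right hsq hn'

theorem stmt_10 (n : ℕ) (hn : 2 ≤ n) (L : ℕ → ℝ)
    (hpos : ∀ i < n, 0 < L i)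
    (hdec : ∀ i j, i ≤ j → j < n → L j ≤ L i)
    (hcond : (L 0)^2 < (∑ i ∈ Finset.range n, L i) * L 1) :
    1 - (Real.sqrt ((L 0 + L 1) * (∑ i ∈ Finset.range n, L i) - (L 0)^2) +
        Real.sqrt (L 0 * L 1))^2 / ((n : ℝ) * (L 0 + L 1)^2) < 1 - 1/(n : ℝ) :=
  stmt_10_general n hn L hpos hcond
end

section
/- For n ≥ 2 players with maximum achievable utilities L_1 = 1 and L_2 = ⋯ = L_n = ε, where 0 < ε ≤ (√(4n−3) − 1)/(2(n−1)), the bound 1 − min_{1 ≤ l ≤ n−1} [(1 + (l−1)√ε)² + (n−l)ε]/(n(1+(l−1)ε)) is at least 1 − 1/n − (n−1)ε/n. Consequently, the supremum over all L ∈ (0,1]^n of the proportional-fairness upper bound equals 1 − 1/n. -/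
/-! Bounding the minimum by its term at `l = 1` gives `UB ≥ 1 - (1 + (n-1)ε)/n`, which is the
first claim; letting `ε → 0` inside the admissible range pushes this lower bound to `1 - 1/n`. -/

open Finset

/-- The proportional-fairness bound `UB(L; n, PF)` at `L = (1, ε, …, ε)`. -/
noncomputable def pfUpperBound (n : ℕ) (ε : ℝ) (h : (Icc 1 (n - 1)).Nonempty) : ℝ :=
  1 - (Icc 1 (n - 1)).inf' h
    (fun l => ((1 + ((l : ℝ) - 1) * Real.sqrt ε) ^ 2 + ((n : ℝ) - l) * ε) /
      ((n : ℝ) * (1 + ((l : ℝ) - 1) * ε)))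

lemma one_sub_inv_sub_le_pfUpperBound (n : ℕ) (ε : ℝ) (h : (Icc 1 (n - 1)).Nonempty) :
    1 - 1 / (n : ℝ) - ((n : ℝ) - 1) * ε / n ≤ pfUpperBound n ε h := by
  have hone : 1 ∈ Icc 1 (n - 1) := mem_Icc.mpr ⟨le_rfl, nonempty_Icc.mp h⟩
  have hinf := inf'_le (fun l : ℕ => ((1 + ((l : ℝ) - 1) * Real.sqrt ε) ^ 2 + ((n : ℝ) - l) * ε) /
    ((n : ℝ) * (1 + ((l : ℝ) - 1) * ε))) hone
  have hterm : ((1 + (((1 : ℕ) : ℝ) - 1) * Real.sqrt ε) ^ 2 + ((n : ℝ) - (1 : ℕ)) * ε) /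
      ((n : ℝ) * (1 + (((1 : ℕ) : ℝ) - 1) * ε)) = 1 / n + ((n : ℝ) - 1) * ε / n := by
    push_cast; ring
  unfold pfUpperBound
  linarith

lemma admissible_bound_pos {x : ℝ} (hx : 1 < x) :
    0 < (Real.sqrt (4 * x - 3) - 1) / (2 * (x - 1)) := by
  have hsqrt : 1 < Real.sqrt (4 * x - 3) := by
    rw [Real.lt_sqrt zero_le_one]
    linarith
  apply div_pos <;> linarith

theorem stmt_11 (n : ℕ) (hn : 2 ≤ n) (ε : ℝ) :
    (1 - 1/(n : ℝ) - ((n : ℝ) - 1)*ε/n ≤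
      1 - (Finset.Icc 1 (n-1)).inf' (Finset.nonempty_Icc.mpr (by omega))
        (fun l => ((1 + ((l : ℝ) - 1)*Real.sqrt ε)^2 + ((n : ℝ) - l)*ε) /
          ((n : ℝ) * (1 + ((l : ℝ) - 1)*ε)))) ∧
    (∀ δ > (0 : ℝ), ∃ ε' : ℝ, 0 < ε' ∧
      ε' ≤ (Real.sqrt (4*n - 3) - 1) / (2*((n : ℝ) - 1)) ∧
      1 - 1/(n : ℝ) - δ <
        1 - (Finset.Icc 1 (n-1)).inf' (Finset.nonempty_Icc.mpr (by omega))
          (fun l => ((1 + ((l : ℝ) - 1)*Real.sqrt ε')^2 + ((n : ℝ) - l)*ε') /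
            ((n : ℝ) * (1 + ((l : ℝ) - 1)*ε')))) := by
  refine ⟨one_sub_inv_sub_le_pfUpperBound n ε _, fun δ hδ => ?_⟩
  have hn1 : (1 : ℝ) < n := by exact_mod_cast hn
  set B := (Real.sqrt (4 * n - 3) - 1) / (2 * ((n : ℝ) - 1))
  have hε' : 0 < min B δ := lt_min (admissible_bound_pos hn1) hδ
  refine ⟨min B δ, hε', min_le_left _ _, ?_⟩
  have hlower := one_sub_inv_sub_le_pfUpperBound n (min B δ) (nonempty_Icc.mpr (by omega))
  -- `(n - 1) ε' / n < ε' ≤ δ`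
  have hsmall : ((n : ℝ) - 1) * min B δ / n < δ := by
    rw [div_lt_iff₀ (by linarith)]
    nlinarith [min_le_right B δ]
  unfold pfUpperBound at hlower
  linarith
end

section
/- Fix positive reals A, L (with L = L_{l+1}) and integers n > l ≥ 1. Define g(x,y) = x / ((y + n − l − 1 + xL)(Ax + 1 − y)) on the domain 0 ≤ xL ≤ 1, 0 ≤ y ≤ 1, y ≤ Ax, y + xL > 1. If A ≤ (n−l−1)L, then for all feasible (x,y), g(x,y) ≥ 1/((n−l)(A+L)), with equality attainable (e.g., at x = 1/(A+L), y = 1 − xL). -/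
/-! Write `s = y + xL - 1 > 0`. Then the denominator of `g` is `(m + s)(x(A + L) - s)` with
`m = n - l`, which equals `m x (A + L) - s (m - 1 + y - A x)`. The case hypothesis gives
`A x ≤ m - 1`, and `y > 1 - x L ≥ 0`, so the subtracted term is nonnegative and `g(x, y) ≥ 1 / (m (A + L))`;
at `y = 1 - x L`, `x = 1 / (A + L)` we have `s = 0` and the bound is attained. -/

lemma mul_le_sub_one_of_le_sub_one_mul {m A L x : ℝ} (hA : 0 ≤ A) (hL : 0 < L)
    (hcase : A ≤ (m - 1) * L) (hxL : x * L ≤ 1) : A * x ≤ m - 1 :=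
  le_of_mul_le_mul_right
    (calc A * x * L = A * (x * L) := mul_assoc A x L
      _ ≤ A := mul_le_of_le_one_right hA hxL
      _ ≤ (m - 1) * L := hcase) hL

lemma denominator_eq_sub (m A L x y : ℝ) :
    (y + m - 1 + x * L) * (A * x + 1 - y) =
      m * (x * (A + L)) - (y + x * L - 1) * (m - 1 + y - A * x) := by
  ring

theorem one_div_le_div_of_le_sub_one_mul {m A L x y : ℝ} (hA : 0 ≤ A) (hL : 0 < L)
    (hcase : A ≤ (m - 1) * L) (hxL : x * L ≤ 1) (hyAx : y ≤ A * x)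
    (hsum : 1 < y + x * L) :
    1 / (m * (A + L)) ≤ x / ((y + m - 1 + x * L) * (A * x + 1 - y)) := by
  have hm : 1 ≤ m := by nlinarith
  have hAx : A * x ≤ m - 1 := mul_le_sub_one_of_le_sub_one_mul hA hL hcase hxL
  have hden : 0 < (y + m - 1 + x * L) * (A * x + 1 - y) :=
    mul_pos (by linarith) (by linarith)
  have hslack : 0 ≤ (y + x * L - 1) * (m - 1 + y - A * x) :=
    mul_nonneg (by linarith) (by linarith)
  rw [div_le_div_iff₀ (by positivity) hden, denominator_eq_sub]
  linarith

theorem stmt_12_general (n l : ℕ) (A L : ℝ)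
    (hA : 0 < A) (hL : 0 < L) (hcase : A ≤ ((n : ℝ) - l - 1) * L) :
    (∀ x y : ℝ, 0 ≤ x → x * L ≤ 1 → 0 ≤ y → y ≤ 1 → y ≤ A * x → 1 < y + x * L →
      1 / (((n : ℝ) - l) * (A + L)) ≤
        x / ((y + (n : ℝ) - l - 1 + x * L) * (A * x + 1 - y))) ∧
    (1/(A + L)) / (((1 - (1/(A + L)) * L) + (n : ℝ) - l - 1 + (1/(A + L)) * L) *
        (A * (1/(A + L)) + 1 - (1 - (1/(A + L)) * L))) =
      1 / (((n : ℝ) - l) * (A + L)) := by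
  refine ⟨fun x y _ hxL _ _ hyAx hsum => ?_, ?_⟩
  · rw [show y + (n : ℝ) - l - 1 + x * L = y + ((n : ℝ) - l) - 1 + x * L by ring]
    exact one_div_le_div_of_le_sub_one_mul hA.le hL hcase hxL hyAx hsum
  · have hAL : A + L ≠ 0 := by positivity
    have hfirst : (1 - (1/(A + L)) * L) + (n : ℝ) - l - 1 + (1/(A + L)) * L = (n : ℝ) - l := by
      ring
    have hsecond : A * (1/(A + L)) + 1 - (1 - (1/(A + L)) * L) = 1 := by
      field_simp
      ring
    rw [hfirst, hsecond, mul_one, div_div, mul_comm]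

theorem stmt_12 (n l : ℕ) (hl : 1 ≤ l) (hln : l < n) (A L : ℝ)
    (hA : 0 < A) (hL : 0 < L) (hcase : A ≤ ((n : ℝ) - l - 1) * L) :
    (∀ x y : ℝ, 0 ≤ x → x * L ≤ 1 → 0 ≤ y → y ≤ 1 → y ≤ A * x → 1 < y + x * L →
      1 / (((n : ℝ) - l) * (A + L)) ≤
        x / ((y + (n : ℝ) - l - 1 + x * L) * (A * x + 1 - y))) ∧
    (1/(A + L)) / (((1 - (1/(A + L)) * L) + (n : ℝ) - l - 1 + (1/(A + L)) * L) *
        (A * (1/(A + L)) + 1 - (1 - (1/(A + L)) * L))) =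
      1 / (((n : ℝ) - l) * (A + L)) :=
  stmt_12_general n l A L hA hL hcase
end

section
/- Fix positive reals A, L and integers n > l ≥ 1 with (n−l−1)L < A ≤ (n−l+1)L. Define g(x,y) = x / ((y + n − l − 1 + xL)(Ax + 1 − y)) on the domain 0 ≤ xL ≤ 1, 0 ≤ y ≤ 1, y ≤ Ax, y + xL ≥ 1. Then g(x,y) ≥ 4L/(A + (n−l+1)L)² for all feasible (x,y), with equality at x = 1/L, y = (A/L − n + l + 1)/2. -/
theorem stmt_13 (n l : ℕ) (hl : 1 ≤ l) (hln : l < n) (A L : ℝ)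
    (hA : 0 < A) (hL : 0 < L)
    (hcase1 : ((n : ℝ) - l - 1) * L < A) (hcase2 : A ≤ ((n : ℝ) - l + 1) * L) :
    (∀ x y : ℝ, 0 ≤ x → x * L ≤ 1 → 0 ≤ y → y ≤ 1 → y ≤ A * x → 1 ≤ y + x * L →
      4*L / (A + ((n : ℝ) - l + 1) * L)^2 ≤
        x / ((y + (n : ℝ) - l - 1 + x * L) * (A * x + 1 - y))) ∧
    (1/L) / (((A/L - (n : ℝ) + l + 1)/2 + (n : ℝ) - l - 1 + (1/L) * L) *
        (A * (1/L) + 1 - (A/L - (n : ℝ) + l + 1)/2)) =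
      4*L / (A + ((n : ℝ) - l + 1) * L)^2 := by
  have hc : (1:ℝ) ≤ (n:ℝ) - l := by
    have : (l:ℝ) + 1 ≤ n := by exact_mod_cast hln
    linarith
  have hD : 0 < A + ((n:ℝ) - l + 1) * L := by nlinarith
  constructor
  · intro x y hx hx1 hy0 hy1 hyAx hyxL
    have hxpos : 0 < x := by nlinarith
    have hv : (1:ℝ) ≤ A * x + 1 - y := by linarith
    have hu : (1:ℝ) ≤ y + (n:ℝ) - l - 1 + x * L := by linarith
    rw [div_le_div_iff₀ (by positivity) (by nlinarith)]
    nlinarith [sq_nonneg ((A+L)*x - ((n:ℝ)-l)*x*L - 2*(y+x*L-1)),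
      mul_nonneg (mul_nonneg (by linarith : (0:ℝ) ≤ y+x*L-1)
        (by linarith : (0:ℝ) ≤ 1 - x*L)) (by linarith : (0:ℝ) ≤ A*x+1-y),
      mul_pos hxpos hL, mul_pos hxpos hxpos]
  · have h1 : ((A/L - (n:ℝ) + l + 1)/2 + (n:ℝ) - l - 1 + (1/L) * L) *
        (A * (1/L) + 1 - (A/L - (n:ℝ) + l + 1)/2) ≠ 0 := by
      have hLne : L ≠ 0 := ne_of_gt hL
      have : (1/L) * L = 1 := by field_simp
      rw [this]
      have hpos : 0 < (A/L + ((n:ℝ) - l) + 1)/2 := by positivity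
      have e1 : (A/L - (n:ℝ) + l + 1)/2 + (n:ℝ) - l - 1 + 1 = (A/L + ((n:ℝ)-l) + 1)/2 := by ring
      have e2 : A * (1/L) + 1 - (A/L - (n:ℝ) + l + 1)/2 = (A/L + ((n:ℝ)-l) + 1)/2 := by
        field_simp; ring
      rw [e1, e2]
      positivity
    rw [div_eq_div_iff h1 (by positivity)]
    field_simp
    ring
end

section
/- Fix positive reals A, L and integers n > l ≥ 1 with A > (n−l+1)L. Define g(x,y) = x / ((y + n − l − 1 + xL)(Ax + 1 − y)) on the domain 0 ≤ xL ≤ 1, 0 ≤ y ≤ 1, y ≤ Ax, y + xL ≥ 1. Then g(x,y) ≥ 1/(A(n−l+1)) for all feasible (x,y), with equality at x = 1/L, y = 1. -/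
theorem stmt_14 (n l : ℕ) (hl : 1 ≤ l) (hln : l < n) (A L : ℝ)
    (hA : 0 < A) (hL : 0 < L) (hcase : ((n : ℝ) - l + 1) * L < A) :
    (∀ x y : ℝ, 0 ≤ x → x * L ≤ 1 → 0 ≤ y → y ≤ 1 → y ≤ A * x → 1 ≤ y + x * L →
      1 / (A * ((n : ℝ) - l + 1)) ≤
        x / ((y + (n : ℝ) - l - 1 + x * L) * (A * x + 1 - y))) ∧
    (1/L) / ((1 + (n : ℝ) - l - 1 + (1/L) * L) * (A * (1/L) + 1 - 1)) =
      1 / (A * ((n : ℝ) - l + 1)) := by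
  have hm : (1:ℝ) ≤ (n:ℝ) - l := by
    have : (l:ℝ) + 1 ≤ (n:ℝ) := by exact_mod_cast hln
    linarith
  set m : ℝ := (n:ℝ) - l with hmdef
  constructor
  · intro x y hx hxL hy hy1 hyAx hyxL
    have hx0 : 0 < x := by
      rcases hx.lt_or_eq with h | h
      · exact h
      · exfalso; nlinarith
    have hu : 0 < y + m - 1 + x * L := by linarith
    have hv : 0 < A * x + 1 - y := by nlinarith
    have hAm : A - L * m - x * L ^ 2 ≥ 0 := by nlinarith
    have key : (y + m - 1 + x * L) * (A * x + 1 - y) ≤ A * (m + 1) * x := by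
      rcases le_or_gt 0 (m + x * L - A * x) with hc | hc
      · nlinarith [mul_nonneg (by linarith : (0:ℝ) ≤ x * L - (1 - y)) hc,
          sq_nonneg (1 - y), mul_nonneg hx hAm.le]
      · nlinarith [mul_nonneg (by linarith : (0:ℝ) ≤ 1 - y) (le_of_lt (neg_pos.mpr hc)),
          sq_nonneg (1 - y), mul_nonneg hx hAm.le]
    have e : y + (n:ℝ) - l - 1 + x * L = y + m - 1 + x * L := by rw [hmdef]; ring
    rw [e, div_le_div_iff₀ (by positivity) (mul_pos hu hv)]
    nlinarith [key]
  · have hL' : L ≠ 0 := ne_of_gt hL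
    have hm1 : m + 1 ≠ 0 := by linarith
    have e : (1 + (n:ℝ) - l - 1 + (1/L) * L) * (A * (1/L) + 1 - 1) = (m + 1) * (A / L) := by
      rw [hmdef]; field_simp; ring_nf
    rw [e]
    rw [div_eq_div_iff (by positivity) (by positivity)]
    field_simp
end

section
/- Let n ≥ 2 and L_1 ≥ ⋯ ≥ L_n > 0. If an integer l with 1 ≤ l ≤ n−1 satisfies (n−l−1)L_{l+1} < ∑_{i=1}^l L_i ≤ (n−l+1)L_{l+1}, then 4L_{l+1}(∑_{i=1}^{l} L_i + L_{l+1}) / (∑_{i=1}^{l} L_i + (n−l+1)L_{l+1})² > 1/n, and hence 1 − 4L_{l+1}∑_{i=1}^n L_i / (∑_{i=1}^{l} L_i + (n−l+1)L_{l+1})² < 1 − 1/n. -/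
/-!
Write `M = L l`, `x = ∑_{i<l} L i` and `k = n - l`. On `(k - 1) M < x ≤ (k + 1) M` the ratio
`q(x) = 4M(x + M) / (x + (k + 1)M)²` is decreasing, so it is at least its value
`(k + 2) / (k + 1)²` at the right endpoint, and this exceeds `1/n` because `k + 1 ≤ n`.
The second inequality follows since `x + M ≤ ∑_{i<n} L i`.
-/

theorem add_two_div_sq_le_four_mul_div_sq {k M x : ℝ} (hk : 0 ≤ k) (hM : 0 < M)
    (h₁ : (k - 1) * M < x) (h₂ : x ≤ (k + 1) * M) :
    (k + 2) / (k + 1) ^ 2 ≤ 4 * M * (x + M) / (x + (k + 1) * M) ^ 2 := by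
  have hD : 0 < x + (k + 1) * M := by nlinarith
  rw [div_le_div_iff₀ (by positivity) (by positivity)]
  -- `4M(x + M)(k + 1)² - (k + 2)(x + (k + 1)M)² = ((k + 1)M - x)((k + 2)x + (k + 1)(2 - k)M)`,
  -- and the second factor exceeds `2kM ≥ 0` because `x > (k - 1)M`.
  have hfactor : 0 ≤ ((k + 1) * M - x) * ((k + 2) * x + (k + 1) * (2 - k) * M) := by
    apply mul_nonneg (by linarith)
    nlinarith
  linear_combination hfactor

theorem one_div_lt_add_two_div_sq {k n : ℝ} (hk : 0 ≤ k) (hkn : k + 1 ≤ n) :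
    1 / n < (k + 2) / (k + 1) ^ 2 := by
  rw [div_lt_div_iff₀ (by linarith) (by positivity)]
  nlinarith

theorem sum_range_add_le_sum_range {f : ℕ → ℝ} {l n : ℕ} (hln : l < n)
    (hf : ∀ i < n, 0 ≤ f i) :
    ∑ i ∈ Finset.range l, f i + f l ≤ ∑ i ∈ Finset.range n, f i := by
  rw [← Finset.sum_range_succ]
  exact Finset.sum_le_sum_of_subset_of_nonneg (Finset.range_subset_range.mpr hln)
    fun i hi _ => hf i (Finset.mem_range.mp hi)

theorem stmt_17_general (n : ℕ) (L : ℕ → ℝ)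
    (hpos : ∀ i < n, 0 < L i)
    (l : ℕ) (hl : 1 ≤ l) (hln : l ≤ n - 1)
    (hc1 : ((n : ℝ) - l - 1) * L l < ∑ i ∈ Finset.range l, L i)
    (hc2 : ∑ i ∈ Finset.range l, L i ≤ ((n : ℝ) - l + 1) * L l) :
    1/(n : ℝ) < 4 * L l * ((∑ i ∈ Finset.range l, L i) + L l) /
        ((∑ i ∈ Finset.range l, L i) + ((n : ℝ) - l + 1) * L l)^2 ∧
    1 - 4 * L l * (∑ i ∈ Finset.range n, L i) /
        ((∑ i ∈ Finset.range l, L i) + ((n : ℝ) - l + 1) * L l)^2 < 1 - 1/(n : ℝ) := by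
  have hl_lt : l < n := by omega
  have hk : (0 : ℝ) ≤ n - l := sub_nonneg.mpr (by exact_mod_cast hl_lt.le)
  have hkn : (n : ℝ) - l + 1 ≤ n := by
    have : (1 : ℝ) ≤ l := by exact_mod_cast hl
    linarith
  have hM : 0 < L l := hpos l hl_lt
  have hfirst := (one_div_lt_add_two_div_sq hk hkn).trans_le
    (add_two_div_sq_le_four_mul_div_sq hk hM hc1 hc2)
  refine ⟨hfirst, sub_lt_sub_left (hfirst.trans_le ?_) 1⟩
  have hsum := sum_range_add_le_sum_range hl_lt fun i hi => (hpos i hi).le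
  gcongr

theorem stmt_17 (n : ℕ) (hn : 2 ≤ n) (L : ℕ → ℝ)
    (hpos : ∀ i < n, 0 < L i)
    (hdec : ∀ i j, i ≤ j → j < n → L j ≤ L i)
    (l : ℕ) (hl : 1 ≤ l) (hln : l ≤ n - 1)
    (hc1 : ((n : ℝ) - l - 1) * L l < ∑ i ∈ Finset.range l, L i)
    (hc2 : ∑ i ∈ Finset.range l, L i ≤ ((n : ℝ) - l + 1) * L l) :
    1/(n : ℝ) < 4 * L l * ((∑ i ∈ Finset.range l, L i) + L l) /
        ((∑ i ∈ Finset.range l, L i) + ((n : ℝ) - l + 1) * L l)^2 ∧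
    1 - 4 * L l * (∑ i ∈ Finset.range n, L i) /
        ((∑ i ∈ Finset.range l, L i) + ((n : ℝ) - l + 1) * L l)^2 < 1 - 1/(n : ℝ) :=
  stmt_17_general n L hpos l hl hln hc1 hc2
end

section
/- Define Δ(n) for n ≥ 2 by Δ(n) = ε²/(k(n − 2√n + 1)) when 0 ≤ ε ≤ (1 + 2√n − √(1+4n))/2 and Δ(n) = (1−ε)²/((k+1)(n − 2√n + 1)) when (1 + 2√n − √(1+4n))/2 < ε < 1, where k = ⌊√n⌋ and ε = √n − k. Then for any positive integer a, Δ (extended to real n) is nondecreasing on [a², a(a+1)] and decreasing on [a(a+1), (a+1)²), so Δ attains a local maximum at n = a(a+1). -/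
noncomputable def Delta (x : ℝ) : ℝ :=
  let k : ℝ := (Nat.floor (Real.sqrt x) : ℝ)
  let ε : ℝ := Real.sqrt x - k
  if ε ≤ (1 + 2*Real.sqrt x - Real.sqrt (1 + 4*x))/2 then
    ε^2 / (k * (x - 2*Real.sqrt x + 1))
  else (1 - ε)^2 / ((k + 1) * (x - 2*Real.sqrt x + 1))

lemma sqrt_facts (a : ℕ) {x : ℝ} (h1 : (a:ℝ)^2 ≤ x) (h2 : x < ((a:ℝ)+1)^2) :
    (a:ℝ) ≤ Real.sqrt x ∧ Real.sqrt x < (a:ℝ)+1 ∧ Nat.floor (Real.sqrt x) = a := by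
  have ha0 : (0:ℝ) ≤ a := Nat.cast_nonneg a
  have hx0 : (0:ℝ) ≤ x := le_trans (by positivity) h1
  have hle : (a:ℝ) ≤ Real.sqrt x := by
    have := Real.sqrt_le_sqrt h1
    rwa [Real.sqrt_sq ha0] at this
  have hlt : Real.sqrt x < (a:ℝ)+1 := by
    have := Real.sqrt_lt_sqrt hx0 h2
    rwa [Real.sqrt_sq (by positivity)] at this
  refine ⟨hle, hlt, ?_⟩
  rw [Nat.floor_eq_iff (Real.sqrt_nonneg x)]
  exact ⟨hle, by push_cast; exact hlt⟩

lemma delta1 (a : ℕ) (ha : 1 ≤ a) {x : ℝ} (hx2 : 2 ≤ x) (h1 : (a:ℝ)^2 ≤ x)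
    (h2 : x ≤ (a:ℝ)*((a:ℝ)+1)) :
    Delta x = ((Real.sqrt x - a)/(Real.sqrt x - 1))^2 / a := by
  have ha0 : (0:ℝ) < a := by exact_mod_cast ha
  have h2' : x < ((a:ℝ)+1)^2 := lt_of_le_of_lt h2 (by nlinarith)
  obtain ⟨hle, hlt, hfl⟩ := sqrt_facts a h1 h2'
  have hx0 : (0:ℝ) ≤ x := by linarith
  have hs1 : 1 < Real.sqrt x := by
    rw [show (1:ℝ) = Real.sqrt 1 by simp]
    exact Real.sqrt_lt_sqrt (by norm_num) (by linarith)
  have hsq : Real.sqrt x ^ 2 = x := Real.sq_sqrt hx0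
  have hcond : Real.sqrt x - (a:ℝ) ≤ (1 + 2*Real.sqrt x - Real.sqrt (1 + 4*x))/2 := by
    have ht : Real.sqrt (1 + 4*x) ≤ 2*(a:ℝ)+1 := by
      have := Real.sqrt_le_sqrt (show 1 + 4*x ≤ (2*(a:ℝ)+1)^2 by nlinarith)
      rwa [Real.sqrt_sq (by positivity)] at this
    linarith
  simp only [Delta, hfl, if_pos hcond]
  have : x - 2*Real.sqrt x + 1 = (Real.sqrt x - 1)^2 := by nlinarith
  rw [this]
  field_simp

lemma delta2 (a : ℕ) (ha : 1 ≤ a) {x : ℝ} (hx2 : 2 ≤ x) (h1 : (a:ℝ)*((a:ℝ)+1) ≤ x)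
    (h2 : x < ((a:ℝ)+1)^2) :
    Delta x = (((a:ℝ)+1 - Real.sqrt x)/(Real.sqrt x - 1))^2 / ((a:ℝ)+1) := by
  have ha0 : (0:ℝ) < a := by exact_mod_cast ha
  have h1' : (a:ℝ)^2 ≤ x := le_trans (by nlinarith) h1
  obtain ⟨hle, hlt, hfl⟩ := sqrt_facts a h1' h2
  have hx0 : (0:ℝ) ≤ x := by linarith
  have hs1 : 1 < Real.sqrt x := by
    rw [show (1:ℝ) = Real.sqrt 1 by simp]
    exact Real.sqrt_lt_sqrt (by norm_num) (by linarith)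
  have hsq : Real.sqrt x ^ 2 = x := Real.sq_sqrt hx0
  rcases eq_or_lt_of_le h1 with heq | hlt2
  · -- x = a(a+1): condition holds with equality; use branch 1 then algebra
    rw [delta1 a ha hx2 h1' (le_of_eq heq.symm)]
    have hval : (Real.sqrt x - a)^2 * ((a:ℝ)+1) = ((a:ℝ)+1 - Real.sqrt x)^2 * a := by
      nlinarith [hsq, heq]
    have hd1 : (0:ℝ) < (Real.sqrt x - 1)^2 * a := mul_pos (pow_pos (by linarith) 2) ha0
    have hd2 : (0:ℝ) < (Real.sqrt x - 1)^2 * ((a:ℝ)+1) := mul_pos (pow_pos (by linarith) 2) (by linarith)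
    rw [div_pow, div_pow, div_div, div_div, div_eq_div_iff hd1.ne' hd2.ne']
    nlinarith [hval, sq_nonneg (Real.sqrt x - 1)]
  · have hcond : ¬ (Real.sqrt x - (a:ℝ) ≤ (1 + 2*Real.sqrt x - Real.sqrt (1 + 4*x))/2) := by
      push_neg
      have ht : 2*(a:ℝ)+1 < Real.sqrt (1 + 4*x) := by
        rw [show (2*(a:ℝ)+1) = Real.sqrt ((2*(a:ℝ)+1)^2) from (Real.sqrt_sq (by positivity)).symm]
        exact Real.sqrt_lt_sqrt (by positivity) (by nlinarith)
      linarith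
    simp only [Delta, hfl, if_neg hcond]
    have : x - 2*Real.sqrt x + 1 = (Real.sqrt x - 1)^2 := by nlinarith
    rw [this]
    field_simp
    ring

theorem stmt_19 (a : ℕ) (ha : 1 ≤ a) :
    MonotoneOn Delta (Set.Icc ((a : ℝ)^2) ((a : ℝ)*((a : ℝ) + 1)) ∩ Set.Ici 2) ∧
    StrictAntiOn Delta (Set.Ico ((a : ℝ)*((a : ℝ) + 1)) (((a : ℝ) + 1)^2) ∩ Set.Ici 2) ∧
    IsLocalMaxOn Delta (Set.Ici (2 : ℝ)) ((a : ℝ)*((a : ℝ) + 1)) := by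
  have ha0 : (1:ℝ) ≤ a := by exact_mod_cast ha
  have hmono : MonotoneOn Delta (Set.Icc ((a : ℝ)^2) ((a : ℝ)*((a : ℝ) + 1)) ∩ Set.Ici 2) := by
    rintro x ⟨⟨hx1, hx2⟩, hx3⟩ y ⟨⟨hy1, hy2⟩, hy3⟩ hxy
    simp only [Set.mem_Ici] at hx3 hy3
    rw [delta1 a ha hx3 hx1 hx2, delta1 a ha hy3 hy1 hy2]
    set sx := Real.sqrt x with hsx
    set sy := Real.sqrt y with hsy
    have hax : (a:ℝ) ≤ sx := ((sqrt_facts a hx1 (lt_of_le_of_lt hx2 (by nlinarith))).1)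
    have hay : (a:ℝ) ≤ sy := ((sqrt_facts a hy1 (lt_of_le_of_lt hy2 (by nlinarith))).1)
    have hx0 : (0:ℝ) ≤ x := by linarith
    have hsxy : sx ≤ sy := Real.sqrt_le_sqrt hxy
    have hsx1 : 1 < sx := by
      rw [hsx, show (1:ℝ) = Real.sqrt 1 by simp]
      exact Real.sqrt_lt_sqrt (by norm_num) (by linarith)
    have hsy1 : 1 < sy := lt_of_lt_of_le hsx1 hsxy
    have key : (sx - a)/(sx - 1) ≤ (sy - a)/(sy - 1) := by
      rw [div_le_div_iff₀ (by linarith) (by linarith)]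
      nlinarith
    have h2 : ((sx - a)/(sx - 1))^2 ≤ ((sy - a)/(sy - 1))^2 := by
      apply pow_le_pow_left₀ (div_nonneg (by linarith) (by linarith)) key
    exact div_le_div_of_nonneg_right h2 (by linarith : (0:ℝ) ≤ a)
  have hanti : StrictAntiOn Delta (Set.Ico ((a : ℝ)*((a : ℝ) + 1)) (((a : ℝ) + 1)^2) ∩ Set.Ici 2) := by
    rintro x ⟨⟨hx1, hx2⟩, hx3⟩ y ⟨⟨hy1, hy2⟩, hy3⟩ hxy
    simp only [Set.mem_Ici] at hx3 hy3
    rw [delta2 a ha hx3 hx1 hx2, delta2 a ha hy3 hy1 hy2]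
    set sx := Real.sqrt x with hsx
    set sy := Real.sqrt y with hsy
    have hax : sx < (a:ℝ)+1 := ((sqrt_facts a (le_trans (by nlinarith) hx1) hx2).2.1)
    have hay : sy < (a:ℝ)+1 := ((sqrt_facts a (le_trans (by nlinarith) hy1) hy2).2.1)
    have hx0 : (0:ℝ) ≤ x := by linarith
    have hsxy : sx < sy := Real.sqrt_lt_sqrt hx0 hxy
    have hsx1 : 1 < sx := by
      rw [hsx, show (1:ℝ) = Real.sqrt 1 by simp]
      exact Real.sqrt_lt_sqrt (by norm_num) (by linarith)
    have hsy1 : 1 < sy := lt_trans hsx1 hsxy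
    have key : ((a:ℝ)+1 - sy)/(sy - 1) < ((a:ℝ)+1 - sx)/(sx - 1) := by
      rw [div_lt_div_iff₀ (by linarith) (by linarith)]
      nlinarith
    have hnn : 0 ≤ ((a:ℝ)+1 - sy)/(sy - 1) := by
      apply div_nonneg <;> linarith
    have : (((a:ℝ)+1 - sy)/(sy - 1))^2 < (((a:ℝ)+1 - sx)/(sx - 1))^2 := by
      exact pow_lt_pow_left₀ key hnn (by norm_num)
    exact div_lt_div_of_pos_right this (by linarith)
  refine ⟨hmono, hanti, ?_⟩
  have hn02 : (2:ℝ) ≤ (a:ℝ)*((a:ℝ)+1) := by nlinarith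
  have hn0 : (a:ℝ)*((a:ℝ)+1) ∈ Set.Ioo ((a:ℝ)^2) (((a:ℝ)+1)^2) := ⟨by nlinarith, by nlinarith⟩
  have hU : Set.Ioo ((a:ℝ)^2) (((a:ℝ)+1)^2) ∈ nhds ((a:ℝ)*((a:ℝ)+1)) := isOpen_Ioo.mem_nhds hn0
  have hU' : Set.Ioo ((a:ℝ)^2) (((a:ℝ)+1)^2) ∈ nhdsWithin ((a:ℝ)*((a:ℝ)+1)) (Set.Ici (2:ℝ)) :=
    nhdsWithin_le_nhds hU
  rw [IsLocalMaxOn, IsMaxFilter]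
  filter_upwards [hU', self_mem_nhdsWithin] with y hy hy2
  simp only [Set.mem_Ici] at hy2
  rcases le_or_gt y ((a:ℝ)*((a:ℝ)+1)) with hle | hlt
  · exact hmono ⟨⟨hy.1.le, hle⟩, hy2⟩ ⟨⟨by nlinarith, le_refl _⟩, hn02⟩ hle
  · exact (hanti ⟨⟨le_refl _, by nlinarith⟩, hn02⟩ ⟨⟨hlt.le, hy.2⟩, hy2⟩ hlt).le
end
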